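/- arXiv:1801.09374 — 3 statements merged into one kernel-verified Lean document; each statement's English description precedes it below -/
import Mathlib

section
/- Let g₁, g₂ ∈ GL_2(ℚ). The elements g₁ ξ₀ g₁⁻¹ and g₂ ξ₀ g₂⁻¹ of SL_2(ℚ) are conjugate by an element of SL_2(ℚ) if and only if there exist rational numbers a, b with det(g₂) = (a² + b²)·det(g₁). -/
/-!
Conjugating `g₁ ξ₀ g₁⁻¹` to `g₂ ξ₀ g₂⁻¹` by `h` amounts to `g₁⁻¹ h⁻¹ g₂` lying in the centralizer
of `ξ₀`, which consists of the matrices `a + b ξ₀`, of determinant `a² + b²`. So a suitable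
`h ∈ SL₂(ℚ)` exists exactly when `det g₂ / det g₁` is the determinant of such a matrix.
-/

open Matrix

def xi0 : Matrix (Fin 2) (Fin 2) ℚ := !![0, -1; 1, 0]

theorem Units.mul_conj_mul_inv_eq_conj_iff_commute {M : Type*} [Monoid M] (u v w : Mˣ) (x : M) :
    (w : M) * (u * x * ↑u⁻¹) * ↑w⁻¹ = v * x * ↑v⁻¹ ↔ Commute (↑u⁻¹ * ↑w⁻¹ * v : M) x := by
  constructor <;> intro h
  · calc ↑u⁻¹ * ↑w⁻¹ * v * x = ↑u⁻¹ * ↑w⁻¹ * (v * x * ↑v⁻¹) * v := by simp [mul_assoc]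
      _ = ↑u⁻¹ * ↑w⁻¹ * (w * (u * x * ↑u⁻¹) * ↑w⁻¹) * v := by rw [h]
      _ = x * (↑u⁻¹ * ↑w⁻¹ * v) := by simp [mul_assoc]
  · calc (w : M) * (u * x * ↑u⁻¹) * ↑w⁻¹ = w * u * (x * (↑u⁻¹ * ↑w⁻¹ * v)) * ↑v⁻¹ := by
          simp [mul_assoc]
      _ = w * u * (↑u⁻¹ * ↑w⁻¹ * v * x) * ↑v⁻¹ := by rw [h.eq]
      _ = v * x * ↑v⁻¹ := by simp [mul_assoc]

section

variable {n R : Type*} [Fintype n] [DecidableEq n] [CommRing R]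

theorem Matrix.SpecialLinearGroup.conj_conj_eq_iff_commute (g₁ g₂ : GL n R)
    (h : SpecialLinearGroup n R) (x : Matrix n n R) :
    (h : Matrix n n R) * ((g₁ : Matrix n n R) * x * (↑g₁⁻¹ : Matrix n n R)) *
        (↑h⁻¹ : Matrix n n R) = (g₂ : Matrix n n R) * x * (↑g₂⁻¹ : Matrix n n R) ↔
      Commute ((↑g₁⁻¹ : Matrix n n R) * (↑h⁻¹ : Matrix n n R) * g₂) x :=
  Units.mul_conj_mul_inv_eq_conj_iff_commute g₁ g₂ (toGL h) x

theorem Matrix.GeneralLinearGroup.det_inv_mul_det (g : GL n R) :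
    (↑g⁻¹ : Matrix n n R).det * (g : Matrix n n R).det = 1 := by
  rw [← det_mul, Units.inv_mul, det_one]

end

theorem commute_xi0_iff {M : Matrix (Fin 2) (Fin 2) ℚ} :
    Commute M xi0 ↔ ∃ a b : ℚ, M = !![a, -b; b, a] := by
  constructor
  · intro h
    have hdiag : M 0 0 = M 1 1 := by
      simpa [xi0, mul_apply, Fin.sum_univ_two] using congrFun₂ h.eq 0 1
    have hoff : -M 1 0 = M 0 1 := by
      simpa [xi0, mul_apply, Fin.sum_univ_two] using congrFun₂ h.eq 1 1
    refine ⟨M 1 1, M 1 0, ?_⟩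
    conv_lhs => rw [eta_fin_two M, hdiag, ← hoff]
  · rintro ⟨a, b, rfl⟩
    simp [Commute, SemiconjBy, xi0]

/-- For `g₁, g₂ ∈ GL₂(ℚ)`, the elements `g₁ ξ₀ g₁⁻¹` and `g₂ ξ₀ g₂⁻¹`
of `SL₂(ℚ)` are conjugate by an element of `SL₂(ℚ)` if and only if
`det g₂ = (a² + b²) · det g₁` for some rationals `a, b`. -/
theorem conj_xi0_iff_det_ratio_sum_two_squares (g₁ g₂ : GL (Fin 2) ℚ) :
    (∃ h : Matrix.SpecialLinearGroup (Fin 2) ℚ,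
      (h : Matrix (Fin 2) (Fin 2) ℚ) *
        ((g₁ : Matrix (Fin 2) (Fin 2) ℚ) * xi0 * ((g₁⁻¹ : GL (Fin 2) ℚ) : Matrix (Fin 2) (Fin 2) ℚ)) *
        ((h⁻¹ : Matrix.SpecialLinearGroup (Fin 2) ℚ) : Matrix (Fin 2) (Fin 2) ℚ) =
      (g₂ : Matrix (Fin 2) (Fin 2) ℚ) * xi0 * ((g₂⁻¹ : GL (Fin 2) ℚ) : Matrix (Fin 2) (Fin 2) ℚ)) ↔
    ∃ a b : ℚ, ((g₂ : Matrix (Fin 2) (Fin 2) ℚ)).det = (a ^ 2 + b ^ 2) * ((g₁ : Matrix (Fin 2) (Fin 2) ℚ)).det := by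
  simp_rw [SpecialLinearGroup.conj_conj_eq_iff_commute, commute_xi0_iff]
  constructor
  · rintro ⟨h, a, b, hab⟩
    have hdet := congrArg det hab
    rw [det_mul, det_mul, Matrix.SpecialLinearGroup.det_coe, det_fin_two_of] at hdet
    exact ⟨a, b, by linear_combination (g₁ : Matrix (Fin 2) (Fin 2) ℚ).det * hdet -
      (g₂ : Matrix (Fin 2) (Fin 2) ℚ).det * GeneralLinearGroup.det_inv_mul_det g₁⟩
  · rintro ⟨a, b, hdet⟩
    let h : SpecialLinearGroup (Fin 2) ℚ :=
      ⟨g₁ * !![a, -b; b, a] * (↑g₂⁻¹ : Matrix (Fin 2) (Fin 2) ℚ), by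
        rw [det_mul, det_mul, det_fin_two_of]
        linear_combination GeneralLinearGroup.det_inv_mul_det g₂ -
          (↑g₂⁻¹ : Matrix (Fin 2) (Fin 2) ℚ).det * hdet⟩
    exact ⟨h⁻¹, a, b, by rw [inv_inv]; simp [h, mul_assoc]⟩
end

section
/- There is a bijection between the set of conjugacy classes of elements of order 4 in SL_2(ℚ) and the quotient group ℚ^×/N, where N is the subgroup of ℚ^× consisting of the nonzero rational numbers of the form a² + b² with a, b ∈ ℚ. -/
/-!
Over a field of characteristic `≠ 2`, `A² = (tr A) A - 1` for `A ∈ SL₂`, and `-1` is the only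
involution of `SL₂`; hence `A` has order `4` iff `tr A = 0`. Over `ℚ` a trace-zero
`A = !![a, b; c, -a]` has `b ≠ 0` (as `-a² - bc = 1`) and is conjugate to `!![0, b; -b⁻¹, 0]`.
If `g = !![p, q; _, _]` conjugates `A` to `B`, then `B₀₁ b = (p b - a q)² + q²`, so the class
of `b` in `ℚˣ / N` is a conjugacy invariant; conversely, conjugation realises multiplication of
`b` by any `u² + v² ≠ 0`.
-/

/-- The subgroup `N ⊆ ℚˣ` of nonzero rational numbers expressible as a sum of two
squares of rational numbers. -/
def sumTwoSquares : Subgroup ℚˣ where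
  carrier := {x : ℚˣ | ∃ a b : ℚ, (x : ℚ) = a ^ 2 + b ^ 2}
  one_mem' := ⟨1, 0, by norm_num⟩
  mul_mem' := by
    rintro x y ⟨a, b, hx⟩ ⟨c, d, hy⟩
    exact ⟨a * c - b * d, a * d + b * c, by rw [Units.val_mul, hx, hy]; ring⟩
  inv_mem' := by
    rintro x ⟨a, b, hx⟩
    have hx0 : (x : ℚ) ≠ 0 := x.ne_zero
    refine ⟨a / (x : ℚ), b / (x : ℚ), ?_⟩
    rw [Units.val_inv_eq_inv_val]
    field_simp
    rw [hx]

open Matrix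
open scoped MatrixGroups

theorem Matrix.mul_self_eq_trace_smul_sub_det_smul_fin_two {R : Type*} [CommRing R]
    (A : Matrix (Fin 2) (Fin 2) R) : A * A = A.trace • A - A.det • 1 := by
  ext i j
  fin_cases i <;> fin_cases j <;>
    simp [mul_apply, trace_fin_two, det_fin_two] <;> ring

namespace Matrix.SpecialLinearGroup

section CommRing

variable {R : Type*} [CommRing R]

theorem sq_eq_neg_one_of_trace_eq_zero {A : SL(2, R)}
    (hA : trace (A : Matrix (Fin 2) (Fin 2) R) = 0) : A ^ 2 = -1 := by
  ext1
  rw [coe_pow, sq, mul_self_eq_trace_smul_sub_det_smul_fin_two, hA, A.det_coe, coe_neg, coe_one,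
    zero_smul, one_smul, zero_sub]

theorem neg_one_ne_one [NeZero (2 : R)] : (-1 : SL(2, R)) ≠ 1 := by
  intro h
  have h00 := congrArg (fun B : SL(2, R) => B 0 0) h
  simp only [coe_neg, coe_one, neg_apply, one_apply_eq] at h00
  exact two_ne_zero (by linear_combination -h00 : (2 : R) = 0)

theorem apply_zero_one_ne_zero_of_trace_eq_zero (hR : ¬IsSquare (-1 : R)) {A : SL(2, R)}
    (hA : trace (A : Matrix (Fin 2) (Fin 2) R) = 0) : A 0 1 ≠ 0 := by
  intro hb
  have hdet := A.det_coe
  rw [det_fin_two, hb] at hdet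
  rw [trace_fin_two] at hA
  exact hR ⟨A 0 0, by linear_combination hdet - A 0 0 * hA⟩

def antidiag (t : Rˣ) : SL(2, R) :=
  ⟨!![0, (t : R); -((t⁻¹ : Rˣ) : R), 0], by simp [det_fin_two_of]⟩

@[simp]
theorem antidiag_apply_zero_one (t : Rˣ) : antidiag t 0 1 = t := rfl

theorem trace_antidiag (t : Rˣ) : trace (antidiag t : Matrix (Fin 2) (Fin 2) R) = 0 := by
  simp [antidiag, trace_fin_two_of]

theorem exists_sq_add_sq_of_isConj {A B : SL(2, R)}
    (hA : trace (A : Matrix (Fin 2) (Fin 2) R) = 0) (h : IsConj A B) :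
    ∃ u v : R, B 0 1 * A 0 1 = u ^ 2 + v ^ 2 := by
  obtain ⟨c, hc⟩ := h
  set g : SL(2, R) := ↑c
  have hgAB : (g : Matrix (Fin 2) (Fin 2) R) * A = B * g := congrArg Subtype.val hc
  have e00 := congrFun (congrFun hgAB 0) 0
  have e01 := congrFun (congrFun hgAB 0) 1
  simp only [mul_apply, Fin.sum_univ_two] at e00 e01
  have hdetA := A.det_coe
  have hdetg := g.det_coe
  rw [det_fin_two] at hdetA hdetg
  rw [trace_fin_two] at hA
  refine ⟨g 0 0 * A 0 1 - A 0 0 * g 0 1, g 0 1, ?_⟩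
  linear_combination A 0 1 * g 0 1 * e00 - A 0 1 * g 0 0 * e01 - A 0 1 * B 0 1 * hdetg
    + A 0 1 * g 0 0 * g 0 1 * hA + g 0 1 ^ 2 * hdetA - g 0 1 ^ 2 * A 0 0 * hA

end CommRing

section Field

variable {K : Type*} [Field K]

theorem isConj_antidiag_of_trace_eq_zero {A : SL(2, K)}
    (hA : trace (A : Matrix (Fin 2) (Fin 2) K) = 0) (hb : A 0 1 ≠ 0) :
    IsConj (antidiag (Units.mk0 (A 0 1) hb)) A := by
  have hdet := A.det_coe
  rw [det_fin_two] at hdet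
  rw [trace_fin_two] at hA
  let g : SL(2, K) := ⟨!![1, 0; -(A 0 0 / A 0 1), 1], by simp [det_fin_two_of]⟩
  have key : ((g * antidiag (Units.mk0 (A 0 1) hb) : SL(2, K)) : Matrix (Fin 2) (Fin 2) K) =
      (A * g : SL(2, K)) := by
    rw [coe_mul, coe_mul]
    ext i j
    fin_cases i <;> fin_cases j <;>
      simp [g, antidiag, mul_apply, Fin.sum_univ_two] <;> field_simp
    · ring
    · linear_combination hdet
    · linear_combination -hA
  exact ⟨toUnits g, Subtype.ext key⟩

theorem isConj_antidiag_of_eq_mul_sq_add_sq {s t : Kˣ} {u v : K}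
    (h : (t : K) = s * (u ^ 2 + v ^ 2)) : IsConj (antidiag s) (antidiag t) := by
  have hn : u ^ 2 + v ^ 2 ≠ 0 := fun h0 => t.ne_zero (by rw [h, h0, mul_zero])
  have hs := s.ne_zero
  -- `g = diag(1, n⁻¹) * (u + v • antidiag s)` with `n = u² + v²`: the second factor commutes
  -- with `antidiag s` and has determinant `n`, the first turns `antidiag s` into `antidiag t`.
  let g : SL(2, K) := ⟨!![u, s * v; -v / (s * (u ^ 2 + v ^ 2)), u / (u ^ 2 + v ^ 2)], by
    rw [det_fin_two_of]; field_simp; ring⟩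
  have key : ((g * antidiag s : SL(2, K)) : Matrix (Fin 2) (Fin 2) K) =
      (antidiag t * g : SL(2, K)) := by
    rw [coe_mul, coe_mul]
    ext i j
    fin_cases i <;> fin_cases j <;>
      simp [g, antidiag, mul_apply, Fin.sum_univ_two, h] <;> field_simp
  exact ⟨toUnits g, Subtype.ext key⟩

variable [NeZero (2 : K)]

theorem eq_neg_one_of_sq_eq_one {B : SL(2, K)} (hB : B ^ 2 = 1) (hB1 : B ≠ 1) : B = -1 := by
  set τ := trace (B : Matrix (Fin 2) (Fin 2) K)
  have hsmul : τ • (B : Matrix (Fin 2) (Fin 2) K) = (2 : K) • 1 := by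
    have hM : (B : Matrix (Fin 2) (Fin 2) K) * B = 1 := by rw [← coe_mul, ← sq, hB, coe_one]
    rw [mul_self_eq_trace_smul_sub_det_smul_fin_two, B.det_coe, one_smul, sub_eq_iff_eq_add] at hM
    rw [hM, two_smul]
  have hτ : τ ≠ 0 := by
    intro h0
    rw [h0, zero_smul, eq_comm, smul_eq_zero] at hsmul
    exact hsmul.elim two_ne_zero one_ne_zero
  have hscalar : (B : Matrix (Fin 2) (Fin 2) K) = (τ⁻¹ * 2) • 1 := by
    rw [mul_smul, ← hsmul, inv_smul_smul₀ hτ]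
  have hdet : (τ⁻¹ * 2) ^ 2 = 1 := by simpa [hscalar, det_smul] using B.det_coe
  rcases sq_eq_one_iff.mp hdet with h1 | h1
  · exact (hB1 (Subtype.ext (by rw [hscalar, h1, one_smul, coe_one]))).elim
  · exact Subtype.ext (by rw [hscalar, h1, neg_one_smul, coe_neg, coe_one])

theorem orderOf_eq_four_iff_trace_eq_zero (A : SL(2, K)) :
    orderOf A = 4 ↔ trace (A : Matrix (Fin 2) (Fin 2) K) = 0 := by
  constructor
  · intro hA
    have hsq : A ^ 2 = -1 := eq_neg_one_of_sq_eq_one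
      (by rw [← pow_mul, show 2 * 2 = orderOf A by omega, pow_orderOf_eq_one])
      (pow_ne_one_of_lt_orderOf two_ne_zero (by omega))
    have hM : (A : Matrix (Fin 2) (Fin 2) K) * A = -1 := by
      rw [← coe_mul, ← sq, hsq, coe_neg, coe_one]
    rw [mul_self_eq_trace_smul_sub_det_smul_fin_two, A.det_coe, one_smul, sub_eq_neg_self] at hM
    refine (smul_eq_zero.mp hM).resolve_right fun h0 => ?_
    simpa [h0] using A.det_coe
  · intro hA
    have h2 := sq_eq_neg_one_of_trace_eq_zero hA
    refine orderOf_eq_prime_pow (p := 2) (n := 1) (by rw [pow_one, h2]; exact neg_one_ne_one) ?_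
    rw [pow_succ, pow_mul, pow_one, h2, neg_one_sq]

theorem exists_isConj_antidiag_of_orderOf_eq_four (hK : ¬IsSquare (-1 : K)) {A : SL(2, K)}
    (hA : orderOf A = 4) : ∃ t : Kˣ, IsConj (antidiag t) A :=
  have htr := (orderOf_eq_four_iff_trace_eq_zero A).1 hA
  ⟨_, isConj_antidiag_of_trace_eq_zero htr (apply_zero_one_ne_zero_of_trace_eq_zero hK htr)⟩

end Field

end Matrix.SpecialLinearGroup

open Matrix.SpecialLinearGroup

theorem mem_sumTwoSquares {x : ℚˣ} :
    x ∈ sumTwoSquares ↔ ∃ a b : ℚ, (x : ℚ) = a ^ 2 + b ^ 2 :=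
  Iff.rfl

theorem isConj_antidiag_iff_inv_mul_mem_sumTwoSquares (s t : ℚˣ) :
    IsConj (antidiag s) (antidiag t) ↔ s⁻¹ * t ∈ sumTwoSquares := by
  rw [mem_sumTwoSquares, Units.val_mul, Units.val_inv_eq_inv_val]
  have hs := s.ne_zero
  constructor
  · intro h
    obtain ⟨u, v, huv⟩ := exists_sq_add_sq_of_isConj (trace_antidiag s) h
    rw [antidiag_apply_zero_one, antidiag_apply_zero_one] at huv
    refine ⟨u / s, v / s, ?_⟩
    field_simp
    linear_combination huv
  · rintro ⟨u, v, huv⟩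
    refine isConj_antidiag_of_eq_mul_sq_add_sq (u := u) (v := v) ?_
    rw [← huv, mul_inv_cancel_left₀ hs]

/-- There is a bijection between the set of conjugacy classes of
elements of order `4` in `SL₂(ℚ)` and the quotient group `ℚˣ/N`, where `N` is the
subgroup of nonzero rationals which are sums of two rational squares. -/
theorem conjClasses_orderFour_SL2_equiv_quotient :
    Nonempty
      ({c : ConjClasses (Matrix.SpecialLinearGroup (Fin 2) ℚ) | ∃ x ∈ c.carrier, orderOf x = 4} ≃
        (ℚˣ ⧸ sumTwoSquares)) := by
  let f : ℚˣ → {c : ConjClasses SL(2, ℚ) | ∃ x ∈ c.carrier, orderOf x = 4} := fun t =>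
    ⟨ConjClasses.mk (antidiag t), antidiag t, ConjClasses.mem_carrier_mk,
      (orderOf_eq_four_iff_trace_eq_zero _).2 (trace_antidiag t)⟩
  have hf : Function.Surjective f := by
    rintro ⟨c, A, hAc, hA⟩
    obtain ⟨t, ht⟩ :=
      exists_isConj_antidiag_of_orderOf_eq_four (not_isSquare_of_neg neg_one_lt_zero) hA
    exact ⟨t, Subtype.ext <|
      (ConjClasses.mk_eq_mk_iff_isConj.mpr ht).trans (ConjClasses.mem_carrier_iff_mk_eq.mp hAc)⟩
  have hker (s t : ℚˣ) : QuotientGroup.leftRel sumTwoSquares s t ↔ Setoid.ker f s t := by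
    rw [QuotientGroup.leftRel_apply, Setoid.ker_def,
      ← isConj_antidiag_iff_inv_mul_mem_sumTwoSquares, Subtype.ext_iff,
      ConjClasses.mk_eq_mk_iff_isConj]
  exact ⟨((Quotient.congrRight hker).trans (Setoid.quotientKerEquivOfSurjective f hf)).symm⟩
end

section
/- Let ℤ[i] be the ring of Gaussian integers. For an integer a and a Gaussian integer b, there exists a polynomial P ∈ ℤ[T] with P(−1) = a and P(i) = b if and only if (1 + i) divides b − a in ℤ[i]. Consequently, the image of ℤ[T]/((T + 1)(T² + 1)) under P ↦ (P(−1), P(i)) is the subring {(a, b) ∈ ℤ × ℤ[i] : a ≡ b (mod (1 + i))}. -/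
/-! $P(i) - P(-1)$ is divisible by $i - (-1) = 1 + i$. Conversely every Gaussian integer is $Q(i)$
for some $Q ∈ ℤ[T]$ (take $Q$ linear), so $a + (1 + i)c$ is the value at $i$ of $a + (T + 1)Q$, whose
value at $-1$ is $a$. -/

open Polynomial

theorem sub_algebraMap_dvd_aeval_sub {R A : Type*} [CommRing R] [CommRing A] [Algebra R A]
    (P : R[X]) (x : A) (r : R) :
    x - algebraMap R A r ∣ aeval x P - algebraMap R A (P.eval r) := by
  simpa only [eval_map_algebraMap, aeval_algebraMap_apply, coe_aeval_eq_eval]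
    using sub_dvd_eval_sub x (algebraMap R A r) (P.map (algebraMap R A))

theorem Zsqrtd.aeval_sqrtd_surjective (d : ℤ) :
    Function.Surjective (aeval (R := ℤ) (Zsqrtd.sqrtd : ℤ√d)) := by
  rintro ⟨x, y⟩
  exact ⟨C x + C y * X, by simp [Zsqrtd.decompose, mul_comm]⟩

theorem exists_eval_neg_one_aeval_sqrtd_iff (a : ℤ) (b : GaussianInt) :
    (∃ P : ℤ[X], P.eval (-1) = a ∧ aeval (Zsqrtd.sqrtd : GaussianInt) P = b) ↔
      (1 + Zsqrtd.sqrtd : GaussianInt) ∣ (b - (a : GaussianInt)) := by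
  constructor
  · rintro ⟨P, rfl, rfl⟩
    have hroot : (Zsqrtd.sqrtd : GaussianInt) - ((-1 : ℤ) : GaussianInt) = 1 + Zsqrtd.sqrtd := by
      push_cast; ring
    simpa only [algebraMap_int_eq, eq_intCast, hroot]
      using sub_algebraMap_dvd_aeval_sub P (Zsqrtd.sqrtd : GaussianInt) (-1)
  · rintro ⟨c, hc⟩
    obtain ⟨Q, hQ⟩ := Zsqrtd.aeval_sqrtd_surjective (-1) c
    refine ⟨(a : ℤ[X]) + (X + 1) * Q, by simp, ?_⟩
    simp only [map_add, map_mul, map_intCast, aeval_X, map_one, hQ]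
    rw [add_comm Zsqrtd.sqrtd 1, ← hc]
    ring

/-- For an integer `a` and a Gaussian integer `b`, there exists
`P ∈ ℤ[T]` with `P(-1) = a` and `P(i) = b` if and only if `(1 + i) ∣ (b - a)` in `ℤ[i]`.
Consequently, the image of `ℤ[T]/((T+1)(T²+1))` under `P ↦ (P(-1), P(i))` is the subring
`{(a, b) ∈ ℤ × ℤ[i] : a ≡ b (mod (1 + i))}`. -/
theorem eval_pair_image_int_poly_gaussian :
    (∀ (a : ℤ) (b : GaussianInt),
      (∃ P : ℤ[X], P.eval (-1) = a ∧ aeval (Zsqrtd.sqrtd : GaussianInt) P = b) ↔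
        (1 + Zsqrtd.sqrtd : GaussianInt) ∣ (b - (a : GaussianInt))) ∧
    Set.range (fun P : ℤ[X] =>
        ((P.eval (-1), aeval (Zsqrtd.sqrtd : GaussianInt) P) : ℤ × GaussianInt)) =
      {p : ℤ × GaussianInt | (1 + Zsqrtd.sqrtd : GaussianInt) ∣ (p.2 - (p.1 : GaussianInt))} := by
  refine ⟨exists_eval_neg_one_aeval_sqrtd_iff, ?_⟩
  ext ⟨a, b⟩
  simpa only [Set.mem_range, Set.mem_ofPred_eq, Prod.mk.injEq]
    using exists_eval_neg_one_aeval_sqrtd_iff a b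
end
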